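/- arXiv:2111.13607 — 8 statements merged into one kernel-verified Lean document; each statement's English description precedes it below -/
import Mathlib

section
/- A group G is weakly surjunctive if and only if every finitely generated subgroup of G is weakly surjunctive. -/
/-
A cellular automaton on `A^G` whose memory set lies in a subgroup `H` acts on every left coset
of `H` as the automaton on `A^H` with the same local rule. Through the coset decomposition
`A^G ≃ (A^H)^(G/H)` it is therefore a product of copies of that automaton, and the two are
injective, surjective and multiplicative together. Automata on `H` thus extend to `G`, and every
automaton on `G` comes from the finitely generated subgroup spanned by its memory set.
-/

/-- A cellular automaton over the group `G` and the alphabet `A`. -/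
def IsCellularAutomaton {G A : Type*} [Group G] (τ : (G → A) → (G → A)) : Prop :=
  ∃ (M : Finset G) (μ : (M → A) → A),
    ∀ (c : G → A) (g : G), τ c g = μ (fun m => c (g * m.1))

/-- A group cellular automaton: a cellular automaton which is moreover a group
homomorphism for the pointwise group structure on `A^G`. -/
def IsGroupCellularAutomaton {G A : Type*} [Group G] [Group A]
    (τ : (G → A) → (G → A)) : Prop :=
  IsCellularAutomaton τ ∧ ∀ x y : G → A, τ (x * y) = τ x * τ y

/-- A group `G` is weakly surjunctive if for every finite group alphabet `A`,
every injective group cellular automaton `A^G → A^G` is surjective. -/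
def WeaklySurjunctive (G : Type*) [Group G] : Prop :=
  ∀ (A : Type) [Group A] [Fintype A] (τ : (G → A) → (G → A)),
    IsGroupCellularAutomaton τ → Function.Injective τ → Function.Surjective τ

open Function

section Semiconj

variable {α β : Type*} {f : α → α} {g : β → β}

theorem Function.Semiconj.injective_iff_of_equiv (e : α ≃ β) (h : Semiconj e f g) :
    Injective f ↔ Injective g := by
  rw [← e.comp_injective, h.comp_eq, e.injective_comp]

theorem Function.Semiconj.surjective_iff_of_equiv (e : α ≃ β) (h : Semiconj e f g) :
    Surjective f ↔ Surjective g := by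
  rw [← e.comp_surjective, h.comp_eq, e.surjective_comp]

end Semiconj

namespace Subgroup

variable {G : Type*} [Group G] (H : Subgroup G)

theorem out_inv_mul_mem (g : G) : (QuotientGroup.mk g : G ⧸ H).out⁻¹ * g ∈ H := by
  rw [← QuotientGroup.eq, QuotientGroup.out_eq']

/-- Unlike `Subgroup.groupEquivQuotientProdSubgroup`, the inverse is definitionally
`(q, h) ↦ q.out * h`. -/
noncomputable def equivQuotientProd : G ≃ (G ⧸ H) × H where
  toFun g := (g, ⟨(g : G ⧸ H).out⁻¹ * g, H.out_inv_mul_mem g⟩)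
  invFun p := p.1.out * p.2
  left_inv g := mul_inv_cancel_left _ g
  right_inv := fun ⟨q, h⟩ => by
    have hq : ((q.out * h : G) : G ⧸ H) = q := by
      rw [QuotientGroup.mk_mul_of_mem _ h.2, QuotientGroup.out_eq']
    ext
    · exact hq
    · simp only [hq, inv_mul_cancel_left]

noncomputable def cosetRestrict (A : Type*) : (G → A) ≃ (G ⧸ H → H → A) :=
  (H.equivQuotientProd.arrowCongr (Equiv.refl A)).trans (Equiv.curry _ _ _)

theorem cosetRestrict_apply {A : Type*} (c : G → A) (q : G ⧸ H) (h : H) :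
    H.cosetRestrict A c q h = c (q.out * h) :=
  rfl

end Subgroup

/-- Memory sets are indexed families `m : ι → G`, so that one local rule `μ` can be read both on
`G` and on a subgroup containing the memory. -/
def ofLocalRule {G A ι : Type*} [Mul G] (m : ι → G) (μ : (ι → A) → A) :
    (G → A) → G → A :=
  fun c g => μ fun i => c (g * m i)

section LocalRule

variable {G A ι : Type*}

theorem IsCellularAutomaton.exists_eq_ofLocalRule [Group G] {τ : (G → A) → G → A}
    (hτ : IsCellularAutomaton τ) :
    ∃ (M : Finset G) (μ : (M → A) → A), τ = ofLocalRule (↑) μ :=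
  let ⟨M, μ, h⟩ := hτ
  ⟨M, μ, funext₂ h⟩

theorem isCellularAutomaton_ofLocalRule [Group G] [Finite ι] (m : ι → G)
    (μ : (ι → A) → A) :
    IsCellularAutomaton (ofLocalRule m μ) := by
  classical
  have := Fintype.ofFinite ι
  exact ⟨Finset.univ.image m,
    fun w => μ fun i => w ⟨m i, Finset.mem_image_of_mem m (by simp)⟩, fun _ _ => rfl⟩

theorem ofLocalRule_map_mul_iff [MulOneClass G] [MulOneClass A] {m : ι → G} (hm : Injective m)
    (μ : (ι → A) → A) :
    (∀ x y : G → A, ofLocalRule m μ (x * y) = ofLocalRule m μ x * ofLocalRule m μ y) ↔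
      ∀ u v : ι → A, μ (u * v) = μ u * μ v := by
  refine ⟨fun h u v => ?_, fun h x y => funext fun g => h _ _⟩
  have h1 := congrFun (h (extend m u 1) (extend m v 1)) 1
  simp only [ofLocalRule, Pi.mul_apply, one_mul, hm.extend_apply] at h1
  exact h1

theorem isGroupCellularAutomaton_ofLocalRule_iff [Group G] [Group A] [Finite ι] {m : ι → G}
    (hm : Injective m) (μ : (ι → A) → A) :
    IsGroupCellularAutomaton (ofLocalRule m μ) ↔ ∀ u v : ι → A, μ (u * v) = μ u * μ v :=
  (and_iff_right (isCellularAutomaton_ofLocalRule m μ)).trans (ofLocalRule_map_mul_iff hm μ)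

end LocalRule

section Restriction

variable {G A ι : Type*} [Group G] {H : Subgroup G} (m : ι → H) (μ : (ι → A) → A)

theorem semiconj_cosetRestrict_ofLocalRule :
    Semiconj (H.cosetRestrict A) (ofLocalRule (fun i => (m i : G)) μ) (ofLocalRule m μ ∘ ·) :=
  fun c => funext₂ fun q h => by
    simp only [Subgroup.cosetRestrict_apply, ofLocalRule, comp_apply, Subgroup.coe_mul, mul_assoc]

theorem injective_ofLocalRule_subgroup_iff :
    Injective (ofLocalRule (fun i => (m i : G)) μ) ↔ Injective (ofLocalRule m μ) :=
  ((semiconj_cosetRestrict_ofLocalRule m μ).injective_iff_of_equiv _).trans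
    injective_comp_left_iff

theorem surjective_ofLocalRule_subgroup_iff :
    Surjective (ofLocalRule (fun i => (m i : G)) μ) ↔ Surjective (ofLocalRule m μ) :=
  ((semiconj_cosetRestrict_ofLocalRule m μ).surjective_iff_of_equiv _).trans
    surjective_comp_left_iff

theorem isGroupCellularAutomaton_ofLocalRule_subgroup_iff [Group A] [Finite ι]
    (hm : Injective m) :
    IsGroupCellularAutomaton (ofLocalRule (fun i => (m i : G)) μ) ↔
      IsGroupCellularAutomaton (ofLocalRule m μ) :=
  (isGroupCellularAutomaton_ofLocalRule_iff (m := fun i => (m i : G))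
    (Subtype.val_injective.comp hm) μ).trans (isGroupCellularAutomaton_ofLocalRule_iff hm μ).symm

end Restriction

namespace WeaklySurjunctive

variable {G : Type*} [Group G]

theorem subgroup (hG : WeaklySurjunctive G) (H : Subgroup G) : WeaklySurjunctive H := by
  intro A _ _ σ hσ hinj
  obtain ⟨M, μ, rfl⟩ := IsCellularAutomaton.exists_eq_ofLocalRule hσ.1
  rw [← isGroupCellularAutomaton_ofLocalRule_subgroup_iff _ _ Subtype.val_injective] at hσ
  rw [← injective_ofLocalRule_subgroup_iff] at hinj
  exact (surjective_ofLocalRule_subgroup_iff _ μ).mp (hG A _ hσ hinj)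

theorem of_forall_fg (h : ∀ H : Subgroup G, H.FG → WeaklySurjunctive H) :
    WeaklySurjunctive G := by
  intro A _ _ τ hτ hinj
  obtain ⟨M, μ, rfl⟩ := IsCellularAutomaton.exists_eq_ofLocalRule hτ.1
  let m : M → Subgroup.closure (M : Set G) := fun i => ⟨i, Subgroup.subset_closure i.2⟩
  have hm : Injective m :=
    .of_comp (f := ((↑) : Subgroup.closure (M : Set G) → G)) Subtype.val_injective
  rw [isGroupCellularAutomaton_ofLocalRule_subgroup_iff m μ hm] at hτ
  rw [injective_ofLocalRule_subgroup_iff m μ] at hinj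
  exact (surjective_ofLocalRule_subgroup_iff m μ).mpr (h _ ⟨M, rfl⟩ A _ hτ hinj)

end WeaklySurjunctive

/-- a group is weakly surjunctive iff all its finitely generated
subgroups are weakly surjunctive. -/
theorem stmt3 (G : Type*) [Group G] :
    WeaklySurjunctive G ↔ ∀ H : Subgroup G, H.FG → WeaklySurjunctive H :=
  ⟨fun hG H _ => hG.subgroup H, WeaklySurjunctive.of_forall_fg⟩
end

section
/- Let G and A be groups and let τ, σ : A^G → A^G be group cellular automata such that σ ∘ τ = id. Then σ is post-surjective: for all x, y ∈ A^G with y asymptotic to σ(x), there exists z ∈ A^G asymptotic to x such that σ(z) = y. -/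
/-- Two configurations are asymptotic if they agree outside a finite subset. -/
def Asymptotic {G A : Type*} (x y : G → A) : Prop :=
  {g : G | x g ≠ y g}.Finite

def IsPostSurjective {X A : Type*} (σ : (X → A) → (X → A)) : Prop :=
  ∀ x y : X → A, Asymptotic y (σ x) → ∃ z : X → A, Asymptotic z x ∧ σ z = y

theorem Asymptotic.mul_inv_mul_left {X A : Type*} [Group A] {u v : X → A} (h : Asymptotic u v)
    (x : X → A) : Asymptotic (x * (v⁻¹ * u)) x :=
  h.subset fun g hg huv => hg (by simp [huv])

theorem IsCellularAutomaton.asymptotic_map {G A : Type*} [Group G] {τ : (G → A) → (G → A)}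
    (hτ : IsCellularAutomaton τ) {x y : G → A} (h : Asymptotic x y) :
    Asymptotic (τ x) (τ y) := by
  obtain ⟨M, μ, hμ⟩ := hτ
  refine ((h.prod M.finite_toSet).image fun p => p.1 * p.2⁻¹).subset fun g hg => ?_
  obtain ⟨m, hm⟩ : ∃ m : M, x (g * m) ≠ y (g * m) := by
    by_contra! hxy
    exact hg (by simp only [hμ, hxy])
  exact ⟨(g * m, m), ⟨hm, m.2⟩, by simp⟩

theorem isPostSurjective_of_rightInverse {X A : Type*} [Group A] (σ : (X → A) →* (X → A))
    {τ : (X → A) → (X → A)} (hτ : ∀ {x y}, Asymptotic x y → Asymptotic (τ x) (τ y))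
    (hστ : Function.RightInverse τ σ) : IsPostSurjective σ := by
  intro x y hy
  refine ⟨x * ((τ (σ x))⁻¹ * τ y), (hτ hy).mul_inv_mul_left x, ?_⟩
  simp [hστ _]

theorem stmt6_general {G A : Type*} [Group G] [Group A] (τ σ : (G → A) → (G → A))
    (hτ : IsCellularAutomaton τ)
    (hσhom : ∀ x y : G → A, σ (x * y) = σ x * σ y)
    (hst : σ ∘ τ = id) :
    ∀ x y : G → A, Asymptotic y (σ x) →
      ∃ z : G → A, Asymptotic z x ∧ σ z = y :=
  isPostSurjective_of_rightInverse (MonoidHom.mk' σ hσhom) hτ.asymptotic_map (congrFun hst)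

/-- if `τ, σ` are group cellular automata with `σ ∘ τ = id`, then
`σ` is post-surjective. -/
theorem stmt6 {G A : Type*} [Group G] [Group A] (τ σ : (G → A) → (G → A))
    (hτ : IsCellularAutomaton τ) (hσ : IsCellularAutomaton σ)
    (hτhom : ∀ x y : G → A, τ (x * y) = τ x * τ y)
    (hσhom : ∀ x y : G → A, σ (x * y) = σ x * σ y)
    (hst : σ ∘ τ = id) :
    ∀ x y : G → A, Asymptotic y (σ x) →
      ∃ z : G → A, Asymptotic z x ∧ σ z = y :=
  stmt6_general τ σ hτ hσhom hst
end

section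
/- Let G be a group and A a finite set. Every bijective cellular automaton τ : A^G → A^G is reversible, i.e., its inverse map τ⁻¹ : A^G → A^G is also a cellular automaton. -/
open Set Topology

/-- The configuration `g⁻¹ • c`. -/
def shift {G A : Type*} [Mul G] (g : G) (c : G → A) : G → A := fun h => c (g * h)

theorem Continuous.exists_finset_dependsOn {ι B : Type*} {X : ι → Type*}
    [∀ i, TopologicalSpace (X i)] [∀ i, DiscreteTopology (X i)] [CompactSpace (∀ i, X i)]
    [TopologicalSpace B] [DiscreteTopology B] {f : (∀ i, X i) → B} (hf : Continuous f) :
    ∃ s : Finset ι, DependsOn f s := by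
  classical
  have hlocal : ∀ x, ∃ I : Finset ι, ∀ y, (∀ i ∈ I, y i = x i) → f y = f x := by
    intro x
    have hfiber : f ⁻¹' {f x} ∈ 𝓝 x := hf.continuousAt.preimage_mem_nhds (by simp)
    rw [nhds_pi, Filter.mem_pi'] at hfiber
    obtain ⟨I, t, ht, hsub⟩ := hfiber
    exact ⟨I, fun y hy => hsub fun i hi => hy i hi ▸ mem_of_mem_nhds (ht i)⟩
  choose I hI using hlocal
  obtain ⟨t, -, hcover⟩ := isCompact_univ.elim_nhds_subcover
    (fun x => (I x : Set ι).pi fun i => {x i})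
    (fun x _ => set_pi_mem_nhds (I x).finite_toSet fun i _ => by simp)
  refine ⟨t.biUnion I, fun y y' hyy' => ?_⟩
  obtain ⟨x, hxt, hyx⟩ := mem_iUnion₂.1 (hcover (mem_univ y))
  have hy'x : ∀ i ∈ I x, y' i = x i := fun i hi =>
    (hyy' i (Finset.mem_biUnion.2 ⟨x, hxt, hi⟩)).symm.trans (hyx i hi)
  rw [hI x y hyx, hI x y' hy'x]

namespace IsCellularAutomaton

variable {G A : Type*} [Group G] {τ : (G → A) → (G → A)}

theorem commute_shift (hτ : IsCellularAutomaton τ) (g : G) : Function.Commute τ (shift g) := by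
  obtain ⟨M, μ, hμ⟩ := hτ
  intro c
  funext h
  simp only [shift, hμ, mul_assoc]

theorem continuous [TopologicalSpace A] [DiscreteTopology A] (hτ : IsCellularAutomaton τ) :
    Continuous τ := by
  obtain ⟨M, μ, hμ⟩ := hτ
  refine continuous_pi fun g => ?_
  simp only [hμ]
  exact continuous_of_discreteTopology.comp (continuous_pi fun m => continuous_apply _)

end IsCellularAutomaton

theorem isCellularAutomaton_of_continuous_of_commute_shift {G A : Type*} [Group G] [Nonempty A]
    [TopologicalSpace A] [DiscreteTopology A] [Finite A] {σ : (G → A) → (G → A)}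
    (hcont : Continuous σ) (hshift : ∀ g, Function.Commute σ (shift g)) : IsCellularAutomaton σ := by
  obtain ⟨M, hM⟩ := ((continuous_apply 1).comp hcont).exists_finset_dependsOn
  obtain ⟨μ, hμ⟩ := dependsOn_iff_exists_comp.1 hM
  refine ⟨M, μ, fun c g => ?_⟩
  calc σ c g = σ (shift g c) 1 := by rw [hshift g c]; simp [shift]
    _ = μ (fun m => c (g * m.1)) := congrFun hμ _

/-- over a finite alphabet, every bijective cellular automaton is
reversible: its inverse map is also a cellular automaton. -/
theorem stmt11 {G A : Type*} [Group G] [Fintype A]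
    (τ : (G → A) → (G → A)) (hca : IsCellularAutomaton τ)
    (hbij : Function.Bijective τ) :
    ∃ σ : (G → A) → (G → A),
      (∀ x, σ (τ x) = x) ∧ (∀ y, τ (σ y) = y) ∧ IsCellularAutomaton σ := by
  rcases isEmpty_or_nonempty A with hA | hA
  · exact ⟨τ, isEmptyElim, isEmptyElim, hca⟩
  let : TopologicalSpace A := ⊥
  have : DiscreteTopology A := ⟨rfl⟩
  let e := Equiv.ofBijective τ hbij
  refine ⟨e.symm, e.symm_apply_apply, e.apply_symm_apply, ?_⟩
  exact isCellularAutomaton_of_continuous_of_commute_shift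
    (Continuous.continuous_symm_of_equiv_compact_to_t2 (f := e) hca.continuous)
    fun g => (hca.commute_shift g).inverse_left e.symm_apply_apply e.apply_symm_apply
end

section
/- Let G be a group whose group ring k[G] over every field k is stably finite. Then G is linearly surjunctive: for every finite-dimensional vector space V over a finite field, every injective linear cellular automaton τ : V^G → V^G is surjective. -/
noncomputable section

namespace Stmt12Aux

open Finsupp

variable {k : Type} [Field k] {G : Type*} [Group G] {n : ℕ}

/-- Pairing of a monoid-algebra element with a function `G → k`. -/
def Q (a : MonoidAlgebra k G) (d : G → k) : k := Finsupp.linearCombination k d a.coeff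

lemma Q_single (g : G) (r : k) (d : G → k) : Q (MonoidAlgebra.single g r) d = r * d g := by
  simp [Q, smul_eq_mul]

lemma Q_zero (d : G → k) : Q (0 : MonoidAlgebra k G) d = 0 := by simp [Q]

lemma Q_add (a b : MonoidAlgebra k G) (d : G → k) : Q (a + b) d = Q a d + Q b d := by
  simp [Q, MonoidAlgebra.coeff_add]

lemma Q_sum {ι : Type*} (s : Finset ι) (F : ι → MonoidAlgebra k G) (d : G → k) :
    Q (∑ i ∈ s, F i) d = ∑ i ∈ s, Q (F i) d := by
  simp [Q, MonoidAlgebra.coeff_sum]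

lemma Q_sum_right {ι : Type*} (a : MonoidAlgebra k G) (s : Finset ι) (F : ι → G → k) :
    Q a (fun g => ∑ i ∈ s, F i g) = ∑ i ∈ s, Q a (F i) := by
  simp only [Q, Finsupp.linearCombination_apply, Finsupp.sum, smul_eq_mul, Finset.mul_sum]
  rw [Finset.sum_comm]

lemma Q_mul (a b : MonoidAlgebra k G) (d : G → k) :
    Q (a * b) d = Q a (fun g => Q b (fun h => d (g * h))) := by
  rw [MonoidAlgebra.mul_def]
  have L : Q (a.coeff.sum fun g r => b.coeff.sum fun h s => MonoidAlgebra.single (g*h) (r*s)) d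
      = a.coeff.sum fun g r => b.coeff.sum fun h s => (r*s) * d (g*h) := by
    simp only [Q, MonoidAlgebra.coeff_finsuppSum, MonoidAlgebra.coeff_single, map_finsuppSum]
    simp only [Finsupp.linearCombination_single, smul_eq_mul]
  rw [L]
  simp only [Q, Finsupp.linearCombination_apply, smul_eq_mul, Finsupp.sum, Finset.mul_sum]
  refine Finset.sum_congr rfl fun g _ => Finset.sum_congr rfl fun h _ => by ring

/-- The action of a matrix over the monoid algebra on configurations. -/
def Phi (A : Matrix (Fin n) (Fin n) (MonoidAlgebra k G)) (c : G → Fin n → k) :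
    G → Fin n → k :=
  fun g i => ∑ j, Q (A i j) (fun h => c (g * h) j)

lemma Phi_one (c : G → Fin n → k) : Phi (1 : Matrix (Fin n) (Fin n) (MonoidAlgebra k G)) c = c := by
  funext g i
  have : ∀ j, Q ((1 : Matrix (Fin n) (Fin n) (MonoidAlgebra k G)) i j) (fun h => c (g * h) j)
      = if j = i then c g i else 0 := by
    intro j
    rw [Matrix.one_apply]
    by_cases h : i = j
    · subst h; simp [MonoidAlgebra.one_def, Q_single]
    · simp [h, Q_zero, Ne.symm h]
  simp only [Phi, this]
  simp

lemma Phi_mul (A B : Matrix (Fin n) (Fin n) (MonoidAlgebra k G)) (c : G → Fin n → k) :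
    Phi (A * B) c = Phi A (Phi B c) := by
  funext g i
  simp only [Phi, Matrix.mul_apply]
  calc ∑ j, Q (∑ l, A i l * B l j) (fun h => c (g * h) j)
      = ∑ j, ∑ l, Q (A i l) (fun h => Q (B l j) (fun h' => c (g * (h * h')) j)) := by
        refine Finset.sum_congr rfl fun j _ => ?_
        rw [Q_sum]
        refine Finset.sum_congr rfl fun l _ => ?_
        rw [Q_mul]
    _ = ∑ l, Q (A i l) (fun h => ∑ j, Q (B l j) (fun h' => c ((g * h) * h') j)) := by
        rw [Finset.sum_comm]
        refine Finset.sum_congr rfl fun l _ => ?_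
        rw [Q_sum_right]
        refine Finset.sum_congr rfl fun j _ => ?_
        have : (fun h => Q (B l j) fun h' => c (g * h * h') j)
            = fun h => Q (B l j) fun h' => c (g * (h * h')) j := by
          funext h; congr 1; funext h'; rw [mul_assoc]
        rw [this]
    _ = _ := rfl

end Stmt12Aux

namespace Stmt12Aux

variable {k : Type} [Field k] {G : Type*} [Group G] {n : ℕ}

/-- Every linear cellular automaton on `(Fin n → k)^G` is given by a matrix. -/
lemma exists_matrix (τ : (G → Fin n → k) → (G → Fin n → k))
    (hca : IsCellularAutomaton τ) (hlin : IsLinearMap k τ) :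
    ∃ A : Matrix (Fin n) (Fin n) (MonoidAlgebra k G), τ = Phi A := by
  obtain ⟨M, μ, hμ⟩ := hca
  classical
  -- elementary configurations
  set E : Fin n → G → G → Fin n → k :=
    fun j m g => if g = m then Pi.single j 1 else 0 with hE
  set A : Matrix (Fin n) (Fin n) (MonoidAlgebra k G) :=
    fun i j => ∑ m ∈ M.attach, MonoidAlgebra.single m.1 (τ (E j m.1) 1 i) with hA
  refine ⟨A, ?_⟩
  set T := IsLinearMap.mk' τ hlin with hT
  have hTapp : ∀ c, τ c = T c := fun c => rfl
  funext c g i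
  -- the shifted configuration
  set d : G → Fin n → k := fun h => c (g * h) with hd
  -- its "cut-off" to M
  set d' : G → Fin n → k := ∑ m ∈ M.attach, ∑ j, d m.1 j • E j m.1 with hd'
  have hdd' : ∀ m : G, m ∈ M → d' m = d m := by
    intro m hm
    have : d' m = ∑ m' ∈ M.attach, ∑ j, d m'.1 j • E j m'.1 m := by
      simp [hd', Finset.sum_apply]
    rw [this]
    rw [Finset.sum_eq_single ⟨m, hm⟩]
    · funext j'
      simp only [hE, if_pos rfl, Finset.sum_apply, Pi.smul_apply, smul_eq_mul,
        Pi.single_apply, mul_ite, mul_one, mul_zero]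
      simp
    · intro b _ hb
      have hbm : m ≠ (b : G) := by
        intro h; apply hb; ext; exact h.symm
      funext j'
      simp [hE, hbm]
    · simp
  have harg1 : (fun m : {x // x ∈ M} => c (g * ↑m)) = fun m : {x // x ∈ M} => d (1 * ↑m) := by
    funext m; simp [hd]
  have h1 : τ c g = τ d 1 := by rw [hμ, hμ, harg1]
  have harg2 : (fun m : {x // x ∈ M} => d (1 * ↑m)) = fun m : {x // x ∈ M} => d' (1 * ↑m) := by
    funext m; simp only [one_mul]; exact (hdd' m.1 m.2).symm
  have h2 : τ d 1 = τ d' 1 := by rw [hμ, hμ, harg2]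
  have h3 : τ d' 1 i = ∑ m ∈ M.attach, ∑ j, d m.1 j * τ (E j m.1) 1 i := by
    rw [hTapp, hd']
    rw [map_sum]
    simp only [Finset.sum_apply]
    refine Finset.sum_congr rfl fun m _ => ?_
    rw [map_sum]
    simp only [Finset.sum_apply]
    refine Finset.sum_congr rfl fun j _ => ?_
    rw [map_smul]
    simp [hTapp]
  have h4 : (Phi A c) g i = ∑ m ∈ M.attach, ∑ j, d m.1 j * τ (E j m.1) 1 i := by
    simp only [Phi, hA, Q_sum, Q_single]
    rw [Finset.sum_comm]
    refine Finset.sum_congr rfl fun m _ => ?_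
    refine Finset.sum_congr rfl fun j _ => ?_
    exact mul_comm _ _
  rw [h1, h2]
  rw [show τ d' 1 i = (Phi A c) g i from h3.trans h4.symm]

end Stmt12Aux

namespace Stmt12Aux

variable {k : Type} [Field k] {G : Type*} [Group G] {n : ℕ}

lemma Q_zero_right (a : MonoidAlgebra k G) : Q a (fun _ => (0 : k)) = 0 := by
  simp [Q, Finsupp.linearCombination_apply, Finsupp.sum]

/-- The pairing between `(k[G])^n` and `((k^n))^G`. -/
def P (x : Fin n → MonoidAlgebra k G) (c : G → Fin n → k) : k :=
  ∑ i, Q (x i) (fun g => c g i)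

lemma P_single (i : Fin n) (a : MonoidAlgebra k G) (d : G → Fin n → k) :
    P (Pi.single i a) d = Q a (fun g => d g i) := by
  unfold P
  rw [Finset.sum_eq_single i]
  · rw [Pi.single_eq_same]
  · intro b _ hb
    rw [Pi.single_eq_of_ne hb, Q_zero]
  · simp

lemma P_rmul (A : Matrix (Fin n) (Fin n) (MonoidAlgebra k G))
    (x : Fin n → MonoidAlgebra k G) (c : G → Fin n → k) :
    P (fun j => ∑ i, x i * A i j) c = P x (Phi A c) := by
  unfold P
  calc ∑ j, Q (∑ i, x i * A i j) (fun g => c g j)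
      = ∑ j, ∑ i, Q (x i) (fun g => Q (A i j) (fun h => c (g * h) j)) := by
        refine Finset.sum_congr rfl fun j _ => ?_
        rw [Q_sum]
        exact Finset.sum_congr rfl fun i _ => Q_mul _ _ _
    _ = ∑ i, Q (x i) (fun g => ∑ j, Q (A i j) (fun h => c (g * h) j)) := by
        rw [Finset.sum_comm]
        exact Finset.sum_congr rfl fun i _ => (Q_sum_right _ _ _).symm
    _ = ∑ i, Q (x i) (fun g => Phi A c g i) := rfl

/-- Every `k`-linear functional on `(k[G])^n` is given by the pairing. -/
lemma f_eq_P (f : (Fin n → MonoidAlgebra k G) →ₗ[k] k) (x : Fin n → MonoidAlgebra k G) :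
    f x = P x (fun g i => f (Pi.single i (MonoidAlgebra.single g 1))) := by
  classical
  conv_lhs => rw [← Finset.univ_sum_single x, map_sum]
  unfold P
  refine Finset.sum_congr rfl fun i _ => ?_
  set φ : MonoidAlgebra k G →ₗ[k] k :=
    f ∘ₗ LinearMap.single k (fun _ : Fin n => MonoidAlgebra k G) i with hφ
  have hφapp : ∀ a, f (Pi.single i a) = φ a := fun a => rfl
  rw [hφapp]
  conv_lhs => rw [← MonoidAlgebra.ofCoeff_coeff (x i), ← Finsupp.sum_single (x i).coeff]
  rw [MonoidAlgebra.ofCoeff_finsuppSum, map_finsuppSum]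
  rw [Q, Finsupp.linearCombination_apply, Finsupp.sum, Finsupp.sum]
  refine Finset.sum_congr rfl fun g _ => ?_
  have h5 : MonoidAlgebra.ofCoeff (Finsupp.single g ((x i).coeff g))
      = ((x i).coeff g) • MonoidAlgebra.single g (1 : k) := by
    rw [MonoidAlgebra.smul_single, smul_eq_mul, mul_one]; rfl
  rw [h5, map_smul, smul_eq_mul, smul_eq_mul]
  try rfl
  try (congr 1; exact (hφapp _).symm)

lemma key (hsf : ∀ α β : Matrix (Fin n) (Fin n) (MonoidAlgebra k G), β * α = 1 → α * β = 1)
    (τ : (G → Fin n → k) → (G → Fin n → k))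
    (hca : IsCellularAutomaton τ) (hlin : IsLinearMap k τ)
    (hinj : Function.Injective τ) : Function.Surjective τ := by
  classical
  obtain ⟨A, rfl⟩ := exists_matrix τ hca hlin
  set L : (Fin n → MonoidAlgebra k G) →ₗ[k] (Fin n → MonoidAlgebra k G) :=
    { toFun := fun x j => ∑ i, x i * A i j
      map_add' := by
        intro x y; funext j
        simp [add_mul, Finset.sum_add_distrib]
      map_smul' := by
        intro r x; funext j
        simp [Finset.smul_sum, smul_mul_assoc] } with hL
  have hLapp : ∀ x j, L x j = ∑ i, x i * A i j := fun x j => rfl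
  have hmem : ∀ j0 : Fin n,
      (Pi.single j0 1 : Fin n → MonoidAlgebra k G) ∈ LinearMap.range L := by
    intro j0
    by_contra hnot
    obtain ⟨f, hf1, hf2⟩ := Submodule.exists_dual_map_eq_bot_of_notMem hnot inferInstance
    set c : G → Fin n → k := fun g i => f (Pi.single i (MonoidAlgebra.single g 1)) with hc
    have hfP : ∀ x, f x = P x c := fun x => f_eq_P f x
    have hker : ∀ x, P x (Phi A c) = 0 := by
      intro x
      have h2 : f (L x) = P x (Phi A c) := (hfP (L x)).trans (P_rmul A x c)
      rw [← h2]
      have hmem' : f (L x) ∈ (LinearMap.range L).map f :=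
        Submodule.mem_map_of_mem (LinearMap.mem_range_self L x)
      rw [hf2] at hmem'
      exact (Submodule.mem_bot k).mp hmem'
    have hPhi0 : Phi A c = 0 := by
      funext g i
      have h := hker (Pi.single i (MonoidAlgebra.single g 1))
      rw [P_single, Q_single, one_mul] at h
      exact h
    have c0 : c = 0 := by
      apply hinj
      rw [hPhi0]
      funext g i
      simp [Phi, Q_zero_right]
    have : f (Pi.single j0 (1 : MonoidAlgebra k G)) = c 1 j0 := by
      show f (Pi.single j0 1) = f (Pi.single j0 (MonoidAlgebra.single 1 1))
      rw [MonoidAlgebra.one_def]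
    rw [this, c0] at hf1
    exact hf1 rfl
  choose b hb using hmem
  set B : Matrix (Fin n) (Fin n) (MonoidAlgebra k G) := Matrix.of (fun j i => b j i) with hB
  have hBA : B * A = 1 := by
    apply Matrix.ext
    intro j l
    rw [Matrix.mul_apply]
    have h := congrFun (hb j) l
    rw [hLapp] at h
    rw [show ∑ i, B j i * A i l = ∑ i, b j i * A i l from rfl, h]
    rw [Matrix.one_apply, Pi.single_apply]
    by_cases hjl : j = l
    · subst hjl; simp
    · simp [hjl, Ne.symm hjl]
  have hAB : A * B = 1 := hsf A B hBA
  intro y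
  refine ⟨Phi B y, ?_⟩
  rw [← Phi_mul, hAB, Phi_one]

end Stmt12Aux

theorem stmt12' (G : Type*) [Group G]
    (hsf : ∀ (k : Type) [Field k] (n : ℕ)
      (α β : Matrix (Fin n) (Fin n) (MonoidAlgebra k G)),
        β * α = 1 → α * β = 1) :
    ∀ (k : Type) [Field k] [Fintype k] (V : Type) [AddCommGroup V] [Module k V]
      [FiniteDimensional k V] (τ : (G → V) → (G → V)),
      IsCellularAutomaton τ → IsLinearMap k τ →
        Function.Injective τ → Function.Surjective τ := by
  intro k _ _ V _ _ _ τ hca hlin hinj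
  classical
  set n := Module.finrank k V with hn
  set e : V ≃ₗ[k] (Fin n → k) := (Module.finBasis k V).equivFun with he
  set τ' : (G → Fin n → k) → (G → Fin n → k) :=
    fun c g => e (τ (fun g' => e.symm (c g')) g) with hτ'
  have hca' : IsCellularAutomaton τ' := by
    obtain ⟨M, μ, hμ⟩ := hca
    refine ⟨M, fun f => e (μ fun m => e.symm (f m)), fun c g => ?_⟩
    simp only [hτ', hμ]
  have hlin' : IsLinearMap k τ' := by
    constructor
    · intro c d
      funext g
      simp only [hτ']
      have h1 : (fun g' => e.symm ((c + d) g'))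
          = (fun g' => e.symm (c g')) + (fun g' => e.symm (d g')) :=
        funext fun g' => by simp [map_add]
      rw [h1, hlin.map_add]
      simp [map_add]
    · intro r c
      funext g
      simp only [hτ']
      have h1 : (fun g' => e.symm ((r • c) g')) = r • (fun g' => e.symm (c g')) :=
        funext fun g' => by simp
      rw [h1, hlin.map_smul]
      simp
  have hinj' : Function.Injective τ' := by
    intro c d h
    have h2 : τ (fun g' => e.symm (c g')) = τ (fun g' => e.symm (d g')) :=
      funext fun g => e.injective (congrFun h g)
    have h3 := hinj h2
    funext g
    have h4 := congrFun h3 g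
    exact e.symm.injective h4
  have hsurj' := Stmt12Aux.key (hsf k n) τ' hca' hlin' hinj'
  intro y
  obtain ⟨c, hcy⟩ := hsurj' (fun g => e (y g))
  refine ⟨fun g => e.symm (c g), ?_⟩
  funext g
  exact e.injective (congrFun hcy g)

/-- if the group ring `k[G]` is stably finite for every field `k`,
then `G` is linearly surjunctive. -/
theorem stmt12 (G : Type*) [Group G]
    (hsf : ∀ (k : Type) [Field k] (n : ℕ)
      (α β : Matrix (Fin n) (Fin n) (MonoidAlgebra k G)),
        β * α = 1 → α * β = 1) :
    ∀ (k : Type) [Field k] [Fintype k] (V : Type) [AddCommGroup V] [Module k V]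
      [FiniteDimensional k V] (τ : (G → V) → (G → V)),
      IsCellularAutomaton τ → IsLinearMap k τ →
        Function.Injective τ → Function.Surjective τ := by
  exact stmt12' G hsf
end
end

section
/- Let G be a group, A a finite group, and τ : A^G → A^G a group cellular automaton. If τ is pre-injective and post-surjective, then τ is bijective. -/
open Filter Set Topology
open scoped Pointwise

namespace Stmt15Aux

variable {G A : Type*} [Group G] [Group A] [Fintype A]
variable [TopologicalSpace A] [DiscreteTopology A]

lemma tau_continuous (τ : (G → A) → (G → A)) (M : Finset G) (μ : (M → A) → A)
    (hμ : ∀ c g, τ c g = μ (fun m => c (g * m.1))) : Continuous τ := by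
  apply continuous_pi
  intro g
  have h : (fun c : G → A => τ c g) = (fun c : G → A => μ (fun m => c (g * m.1))) := by
    funext c; exact hμ c g
  rw [h]
  exact continuous_of_discreteTopology.comp (continuous_pi fun m => continuous_apply _)

lemma tau_shift (τ : (G → A) → (G → A)) (M : Finset G) (μ : (M → A) → A)
    (hμ : ∀ c g, τ c g = μ (fun m => c (g * m.1))) (g : G) (c : G → A) :
    τ (fun h => c (g * h)) = fun h => τ c (g * h) := by
  funext h
  rw [hμ, hμ]
  simp [mul_assoc]

/-- Uniform one-point post-surjectivity at the identity. -/
lemma uniform_one (τ : (G → A) → (G → A)) (M : Finset G) (μ : (M → A) → A)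
    (hμ : ∀ c g, τ c g = μ (fun m => c (g * m.1))) (h1 : (1 : G) ∈ M)
    (hpostsurj : ∀ x y : G → A, Asymptotic y (τ x) →
      ∃ z : G → A, Asymptotic z x ∧ τ z = y) :
    ∃ N : Finset G, ∀ x y : G → A, {g | y g ≠ τ x g} ⊆ {1} →
      ∃ z, τ z = y ∧ {g | z g ≠ x g} ⊆ ↑N := by
  classical
  by_contra hcon
  push_neg at hcon
  choose x y hxy hbad using hcon
  set F : Filter ((G → A) × (G → A)) := Filter.map (fun N => (x N, y N)) atTop with hF
  haveI : F.NeBot := Filter.NeBot.map atTop_neBot _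
  obtain ⟨p, hp⟩ := exists_clusterPt_of_compactSpace F
  have hτcont : Continuous τ := tau_continuous τ M μ hμ
  -- the limit point satisfies: p.2 agrees with τ p.1 off the identity
  have hpC : ∀ g : G, g ≠ 1 → p.2 g = τ p.1 g := by
    set C : Set ((G → A) × (G → A)) := {q | ∀ g : G, g ≠ 1 → q.2 g = τ q.1 g} with hC
    have hclosed : IsClosed C := by
      have : C = ⋂ (g : G), ⋂ (_ : g ≠ 1), {q : (G → A) × (G → A) | q.2 g = τ q.1 g} := by
        ext q; simp [hC]
      rw [this]
      refine isClosed_iInter fun g => isClosed_iInter fun _ => ?_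
      exact isClosed_eq ((continuous_apply g).comp continuous_snd)
        ((continuous_apply g).comp (hτcont.comp continuous_fst))
    have hFC : F ≤ 𝓟 C := by
      rw [hF, Filter.le_principal_iff, Filter.mem_map]
      filter_upwards with N
      intro g hg
      by_contra hne
      exact hg (hxy N hne)
    have : p ∈ closure C := mem_closure_iff_clusterPt.mpr (hp.mono hFC)
    rwa [hclosed.closure_eq] at this
  -- apply post-surjectivity at the limit
  have hasymp : Asymptotic p.2 (τ p.1) := by
    apply Set.Finite.subset (Set.finite_singleton (1 : G))
    intro g hg
    by_contra hne
    exact hg (hpC g hne)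
  obtain ⟨z, hzasym, hz⟩ := hpostsurj p.1 p.2 hasymp
  set K : Finset G := hzasym.toFinset ∪ M with hK
  have hMK : M ⊆ K := Finset.subset_union_right
  have hdiffK : ∀ h : G, h ∉ K → z h = p.1 h := by
    intro h hh
    by_contra hne
    exact hh (Finset.mem_union_left _ (hzasym.mem_toFinset.mpr hne))
  set W₁ : Finset G := K * M⁻¹ * M with hW₁
  set W₂ : Finset G := K * M⁻¹ with hW₂
  set U : Set ((G → A) × (G → A)) :=
    {q | (∀ h ∈ W₁, q.1 h = p.1 h) ∧ ∀ h ∈ W₂, q.2 h = p.2 h} with hU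
  have hUopen : IsOpen U := by
    have : U = (⋂ h ∈ W₁, {q : (G → A) × (G → A) | q.1 h = p.1 h}) ∩
        (⋂ h ∈ W₂, {q : (G → A) × (G → A) | q.2 h = p.2 h}) := by
      ext q; simp [hU]
    rw [this]
    refine IsOpen.inter (isOpen_biInter_finset fun h _ => ?_)
      (isOpen_biInter_finset fun h _ => ?_)
    · have : {q : (G → A) × (G → A) | q.1 h = p.1 h} =
          (fun q : (G → A) × (G → A) => q.1 h) ⁻¹' {p.1 h} := rfl
      rw [this]
      exact IsOpen.preimage ((continuous_apply h).comp continuous_fst) (isOpen_discrete _)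
    · have : {q : (G → A) × (G → A) | q.2 h = p.2 h} =
          (fun q : (G → A) × (G → A) => q.2 h) ⁻¹' {p.2 h} := rfl
      rw [this]
      exact IsOpen.preimage ((continuous_apply h).comp continuous_snd) (isOpen_discrete _)
  have hUnhds : U ∈ 𝓝 p := hUopen.mem_nhds ⟨fun _ _ => rfl, fun _ _ => rfl⟩
  have hV : (fun N => (x N, y N)) '' {N | K ≤ N} ∈ F := by
    rw [hF, Filter.mem_map]
    exact Filter.mem_of_superset (Filter.mem_atTop K) (Set.subset_preimage_image _ _)
  obtain ⟨q, hqU, hqV⟩ := clusterPt_iff_nonempty.mp hp hUnhds hV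
  obtain ⟨N, hKN, hqeq⟩ := hqV
  rw [← hqeq] at hqU
  obtain ⟨hxU, hyU⟩ := hqU
  -- build the local modification
  set w : G → A := fun h => if h ∈ K then z h else x N h with hw
  have hτw : τ w = y N := by
    funext g
    by_cases hg : ∃ m ∈ M, g * m ∈ K
    · -- interior: w agrees with z on the neighborhood of g
      obtain ⟨m₀, hm₀, hgm₀⟩ := hg
      have hgW₂ : g ∈ W₂ := by
        have : g = (g * m₀) * m₀⁻¹ := by group
        rw [hW₂, this]
        exact Finset.mul_mem_mul hgm₀ (Finset.inv_mem_inv hm₀)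
      have hwz : ∀ m : M, w (g * m.1) = z (g * m.1) := by
        rintro ⟨m, hm⟩
        by_cases hK' : g * m ∈ K
        · simp [hw, hK']
        · have h1' : z (g * m) = p.1 (g * m) := hdiffK _ hK'
          have h2' : g * m ∈ W₁ := by
            rw [hW₁]
            exact Finset.mul_mem_mul hgW₂ hm
          have h3' : x N (g * m) = p.1 (g * m) := hxU _ h2'
          simp [hw, hK', h3', h1']
      have heq : (fun m : M => w (g * m.1)) = (fun m : M => z (g * m.1)) := by
        funext m; exact hwz m
      have : τ w g = τ z g := by
        rw [hμ, hμ, heq]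
      rw [this, hz]
      exact (hyU g hgW₂).symm
    · -- exterior: w agrees with x N on the neighborhood of g
      push_neg at hg
      have hwx : ∀ m : M, w (g * m.1) = x N (g * m.1) := by
        rintro ⟨m, hm⟩
        simp [hw, hg m hm]
      have heq : (fun m : M => w (g * m.1)) = (fun m : M => x N (g * m.1)) := by
        funext m; exact hwx m
      have hτ' : τ w g = τ (x N) g := by
        rw [hμ, hμ, heq]
      have hgne : g ≠ 1 := by
        intro hgeq
        exact hg 1 h1 (by rw [hgeq, one_mul]; exact hMK h1)
      rw [hτ']
      by_contra hne
      have : g ∈ ({1} : Set G) := hxy N fun h => hne h.symm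
      exact hgne this
  refine hbad N w hτw (fun h hh => ?_)
  have hK' : h ∈ K := by
    by_contra hK'
    exact hh (by simp [hw, hK'])
  exact Finset.mem_coe.mpr (hKN hK')

/-- Uniform one-point post-surjectivity at an arbitrary point. -/
lemma uniform_one_shift (τ : (G → A) → (G → A)) (M : Finset G) (μ : (M → A) → A)
    (hμ : ∀ c g, τ c g = μ (fun m => c (g * m.1)))
    (N : Finset G)
    (hone : ∀ x y : G → A, {g | y g ≠ τ x g} ⊆ {1} →
      ∃ z, τ z = y ∧ {g | z g ≠ x g} ⊆ ↑N)
    (g : G) (x y : G → A) (hdiff : {h | y h ≠ τ x h} ⊆ {g}) :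
    ∃ z, τ z = y ∧ {h | z h ≠ x h} ⊆ {g} * (↑N : Set G) := by
  set x' : G → A := fun h => x (g * h) with hx'
  set y' : G → A := fun h => y (g * h) with hy'
  have hτx' : τ x' = fun h => τ x (g * h) := tau_shift τ M μ hμ g x
  have hd' : {h | y' h ≠ τ x' h} ⊆ {1} := by
    intro h hh
    rw [hτx'] at hh
    have : g * h ∈ {h | y h ≠ τ x h} := hh
    have := hdiff this
    simp only [Set.mem_singleton_iff] at this ⊢
    exact mul_left_cancel (by rw [this, mul_one])
  obtain ⟨z', hz', hzd⟩ := hone x' y' hd'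
  refine ⟨fun h => z' (g⁻¹ * h), ?_, ?_⟩
  · have := tau_shift τ M μ hμ g⁻¹ z'
    funext h
    calc τ (fun h => z' (g⁻¹ * h)) h = τ z' (g⁻¹ * h) := by rw [this]
    _ = y' (g⁻¹ * h) := by rw [hz']
    _ = y h := by rw [hy']; congr 1; group
  · intro h hh
    have : z' (g⁻¹ * h) ≠ x' (g⁻¹ * h) := by
      rw [hx']
      simpa [mul_assoc] using hh
    have hmem : g⁻¹ * h ∈ (N : Set G) := hzd this
    refine ⟨g, rfl, g⁻¹ * h, hmem, by group⟩

/-- Uniform finite post-surjectivity. -/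
lemma uniform_multi (τ : (G → A) → (G → A)) (M : Finset G) (μ : (M → A) → A)
    (hμ : ∀ c g, τ c g = μ (fun m => c (g * m.1)))
    (N : Finset G)
    (hone : ∀ x y : G → A, {g | y g ≠ τ x g} ⊆ {1} →
      ∃ z, τ z = y ∧ {g | z g ≠ x g} ⊆ ↑N)
    (S : Set G) (hS : S.Finite) :
    ∀ x y : G → A, {g | y g ≠ τ x g} ⊆ S →
      ∃ z, τ z = y ∧ {g | z g ≠ x g} ⊆ S * (↑N : Set G) := by
  classical
  refine Set.Finite.induction_on
    (motive := fun S _ => ∀ x y : G → A, {g | y g ≠ τ x g} ⊆ S →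
      ∃ z, τ z = y ∧ {g | z g ≠ x g} ⊆ S * (↑N : Set G)) S hS ?_ ?_
  · intro x y hd
    refine ⟨x, ?_, by simp⟩
    funext g
    by_contra hne
    exact hd (fun h => hne h.symm) |>.elim
  · intro a s ha hsfin ih
    intro x y hd
    set y' : G → A := fun h => if h = a then τ x h else y h with hy'
    have hd' : {g | y' g ≠ τ x g} ⊆ s := by
      intro h hh
      simp only [hy', Set.mem_setOf_eq] at hh
      by_cases hha : h = a
      · simp [hha] at hh
      · rw [if_neg hha] at hh
        rcases hd hh with h1 | h2
        · exact absurd h1 hha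
        · exact h2
    obtain ⟨z', hz', hzd'⟩ := ih x y' hd'
    have hd2 : {h | y h ≠ τ z' h} ⊆ {a} := by
      intro h hh
      simp only [Set.mem_setOf_eq, hz', hy'] at hh
      by_contra hha
      simp only [Set.mem_singleton_iff] at hha
      rw [if_neg hha] at hh
      exact hh rfl
    obtain ⟨z, hz, hzd⟩ := uniform_one_shift τ M μ hμ N hone a z' y hd2
    refine ⟨z, hz, ?_⟩
    intro h hh
    by_cases hzz : z h = z' h
    · have : z' h ≠ x h := by rw [← hzz]; exact hh
      have := hzd' this
      rw [Set.insert_eq, Set.union_mul]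
      exact Set.mem_union_right _ this
    · have := hzd hzz
      rw [Set.insert_eq, Set.union_mul]
      exact Set.mem_union_left _ this

end Stmt15Aux

/-- over a finite group alphabet, a pre-injective and
post-surjective group cellular automaton is bijective. -/
theorem stmt15 {G A : Type*} [Group G] [Group A] [Fintype A]
    (τ : (G → A) → (G → A))
    (hca : IsCellularAutomaton τ)
    (hhom : ∀ x y : G → A, τ (x * y) = τ x * τ y)
    (hpreinj : ∀ x y : G → A, Asymptotic x y → τ x = τ y → x = y)
    (hpostsurj : ∀ x y : G → A, Asymptotic y (τ x) →
      ∃ z : G → A, Asymptotic z x ∧ τ z = y) :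
    Function.Bijective τ := by
  classical
  letI : TopologicalSpace A := ⊥
  haveI : DiscreteTopology A := ⟨rfl⟩
  obtain ⟨M₀, μ₀, hμ₀⟩ := hca
  -- enlarge the memory set to contain 1
  set M : Finset G := insert 1 M₀ with hM
  set μ : (M → A) → A := fun f => μ₀ (fun m => f ⟨m.1, Finset.mem_insert_of_mem m.2⟩) with hμdef
  have hμ : ∀ (c : G → A) (g : G), τ c g = μ (fun m => c (g * m.1)) := by
    intro c g
    rw [hμ₀]
  have h1M : (1 : G) ∈ M := Finset.mem_insert_self 1 M₀
  have hτ1 : τ 1 = 1 := by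
    have := hhom 1 1
    rw [one_mul] at this
    exact (left_eq_mul.mp this)
  have hτinv : ∀ x : G → A, τ x⁻¹ = (τ x)⁻¹ := by
    intro x
    have := hhom x x⁻¹
    rw [mul_inv_cancel, hτ1] at this
    exact (eq_inv_of_mul_eq_one_right this.symm)
  have hτcont : Continuous τ := Stmt15Aux.tau_continuous τ M μ hμ
  obtain ⟨N, hone⟩ := Stmt15Aux.uniform_one τ M μ hμ h1M hpostsurj
  -- injectivity: the kernel is trivial
  have hker : ∀ c : G → A, τ c = 1 → c = 1 := by
    intro c hc
    funext g
    set F : Finset G := insert g (({g} : Finset G) * N⁻¹ * M) with hFdef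
    set cF : G → A := fun h => if h ∈ F then c h else 1 with hcF
    set S : Set G := {h | τ cF h ≠ 1} with hSdef
    have hSsub : S ⊆ ↑(F * M⁻¹) := by
      intro h hh
      by_contra hmem
      apply hh
      have hout : ∀ m ∈ M, h * m ∉ F := by
        intro m hm hF'
        exact hmem (by
          have : h = (h * m) * m⁻¹ := by group
          rw [this]
          exact Finset.mul_mem_mul hF' (Finset.inv_mem_inv hm))
      have heq : (fun m : M => cF (h * m.1)) = (fun m : M => (1 : G → A) (h * m.1)) := by
        funext m; simp [hcF, hout m.1 m.2]
      have : τ cF h = τ 1 h := by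
        rw [hμ, hμ, heq]
      rw [this, hτ1]
      rfl
    have hSfin : S.Finite := Set.Finite.subset (F * M⁻¹).finite_toSet hSsub
    have hdiff : {h | τ cF h ≠ τ 1 h} ⊆ S := by
      intro h hh
      have h1' : τ (1 : G → A) h = 1 := by rw [hτ1]; rfl
      intro heq
      exact hh (heq.trans h1'.symm)
    obtain ⟨z, hz, hzd⟩ := Stmt15Aux.uniform_multi τ M μ hμ N hone S hSfin 1 (τ cF) hdiff
    have hzcF : z = cF := by
      apply hpreinj
      · have h1 : {h | z h ≠ (1 : G → A) h}.Finite :=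
          Set.Finite.subset (hSfin.mul (N : Set G).toFinite) hzd
        have h2 : {h | cF h ≠ (1 : G → A) h}.Finite := by
          apply Set.Finite.subset F.finite_toSet
          intro h hh
          by_contra hF'
          have hF2 : h ∉ F := fun hx => hF' (Finset.mem_coe.mpr hx)
          exact hh (by simp [hcF, hF2])
        apply Set.Finite.subset (h1.union h2)
        intro h hh
        by_cases hz1 : z h = 1
        · exact Or.inr (fun heq => hh (by rw [hz1, heq]; rfl))
        · exact Or.inl hz1
      · exact hz
    have hgF : g ∈ F := Finset.mem_insert_self g _
    have hgnot : g ∉ S * (↑N : Set G) := by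
      rintro ⟨s, hs, n, hn, hsn⟩
      apply hs
      have hsval : s = g * n⁻¹ := by rw [← hsn]; group
      have hin : ∀ m ∈ M, s * m ∈ F := by
        intro m hm
        rw [hsval, hFdef]
        apply Finset.mem_insert_of_mem
        exact Finset.mul_mem_mul
          (Finset.mul_mem_mul (Finset.mem_singleton_self g) (Finset.inv_mem_inv hn)) hm
      have heq : (fun m : M => cF (s * m.1)) = (fun m : M => c (s * m.1)) := by
        funext m; simp [hcF, hin m.1 m.2]
      have : τ cF s = τ c s := by
        rw [hμ, hμ, heq]
      rw [this, hc]
      rfl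
    have hzg : z g = 1 := by
      by_contra hne
      exact hgnot (hzd hne)
    calc c g = cF g := by simp [hcF, hgF]
    _ = z g := by rw [hzcF]
    _ = 1 := hzg
  constructor
  · -- injective
    intro a b hab
    have : τ (a * b⁻¹) = 1 := by
      rw [hhom, hτinv, hab, mul_inv_cancel]
    have := hker _ this
    have : a * b⁻¹ = 1 := this
    exact mul_inv_eq_one.mp this
  · -- surjective: the range is closed and dense
    have hclosed : IsClosed (Set.range τ) := (isCompact_range hτcont).isClosed
    have hdense : Dense (Set.range τ) := by
      intro y
      rw [mem_closure_iff]
      intro U hU hyU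
      obtain ⟨I, u, hu, hsub⟩ := isOpen_pi_iff.mp hU y hyU
      set w : G → A := fun h => if h ∈ I then y h else 1 with hwdef
      have hwU : w ∈ U := by
        apply hsub
        intro i hi
        have hi' : i ∈ I := Finset.mem_coe.mp hi
        simp only [hwdef]
        rw [if_pos hi']
        exact (hu i hi').2
      have hwasym : Asymptotic w (τ 1) := by
        rw [hτ1]
        apply Set.Finite.subset I.finite_toSet
        intro h hh
        by_contra hI
        have hI2 : h ∉ I := fun hx => hI (Finset.mem_coe.mpr hx)
        exact hh (by simp [hwdef, hI2])
      obtain ⟨z, _, hz⟩ := hpostsurj 1 w hwasym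
      exact ⟨w, hwU, z, hz⟩
    intro y
    have : y ∈ closure (Set.range τ) := hdense y
    rwa [hclosed.closure_eq] at this
end

section
/- Let G be a group, H ≤ G a subgroup, A a group, and μ : A^M → A a group homomorphism where M ⊆ H is finite. Let τ_G : A^G → A^G and τ_H : A^H → A^H be the cellular automata with local defining map μ. If τ_H is injective then τ_G is injective. -/
/-!
Restricting a configuration `c : G → A` to a left coset `gH` and transporting it to `H` along
`h ↦ g * h` intertwines `τG` with `τH`, since `M ⊆ H` means the neighbourhood `g * h * M` of a
point of `gH` stays in `gH`. Two configurations with the same image under `τG` therefore have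
restrictions with the same image under `τH` on every coset, hence equal restrictions when `τH`
is injective; the cosets cover `G`.
-/

def cosetRestrict {G A : Type*} [Group G] (H : Subgroup G) (g : G) (c : G → A) : H → A :=
  fun h => c (g * h)

theorem cosetRestrict_one_apply {G A : Type*} [Group G] (H : Subgroup G) (g : G) (c : G → A) :
    cosetRestrict H g c 1 = c g := by
  simp [cosetRestrict]

theorem ca_cosetRestrict {G A : Type*} [Group G] (H : Subgroup G)
    {M : Finset G} (hM : ∀ m ∈ M, m ∈ H) (μ : (M → A) → A)
    {τG : (G → A) → (G → A)} {τH : (H → A) → (H → A)}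
    (hτG : ∀ (c : G → A) (g : G), τG c g = μ (fun m => c (g * m.1)))
    (hτH : ∀ (c : H → A) (h : H), τH c h = μ (fun m => c (h * ⟨m.1, hM m.1 m.2⟩)))
    (g : G) (c : G → A) :
    τH (cosetRestrict H g c) = cosetRestrict H g (τG c) := by
  funext h
  simp only [hτH, hτG, cosetRestrict, Subgroup.coe_mul, mul_assoc]

theorem stmt16_general {G A : Type*} [Group G] (H : Subgroup G)
    (M : Finset G) (hM : ∀ m ∈ M, m ∈ H)
    (μ : (M → A) → A)
    (τG : (G → A) → (G → A)) (τH : (H → A) → (H → A))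
    (hτG : ∀ (c : G → A) (g : G), τG c g = μ (fun m => c (g * m.1)))
    (hτH : ∀ (c : H → A) (h : H), τH c h = μ (fun m => c (h * ⟨m.1, hM m.1 m.2⟩)))
    (hinj : Function.Injective τH) : Function.Injective τG := by
  intro c c' hcc'
  funext g
  have hrestrict : cosetRestrict H g c = cosetRestrict H g c' :=
    hinj <| by simp only [ca_cosetRestrict H hM μ hτG hτH, hcc']
  simpa only [cosetRestrict_one_apply] using congrFun hrestrict 1

/-- for a group homomorphism local defining map `μ : A^M → A`
with `M ⊆ H ≤ G`, if the induced cellular automaton over `H` is injective then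
the induced cellular automaton over `G` is injective. -/
theorem stmt16 {G A : Type*} [Group G] [Group A] (H : Subgroup G)
    (M : Finset G) (hM : ∀ m ∈ M, m ∈ H)
    (μ : (M → A) → A) (hμ : ∀ u v : M → A, μ (u * v) = μ u * μ v)
    (τG : (G → A) → (G → A)) (τH : (H → A) → (H → A))
    (hτG : ∀ (c : G → A) (g : G), τG c g = μ (fun m => c (g * m.1)))
    (hτH : ∀ (c : H → A) (h : H), τH c h = μ (fun m => c (h * ⟨m.1, hM m.1 m.2⟩)))
    (hinj : Function.Injective τH) : Function.Injective τG :=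
  stmt16_general H M hM μ τG τH hτG hτH hinj
end

section
/- Let G be a group, A a group, and μ : A^M → A a group homomorphism with finite M ⊆ G; let H ≤ G contain M. If the cellular automaton τ_G : A^G → A^G with local defining map μ is surjective, then the cellular automaton τ_H : A^H → A^H with the same local defining map is surjective. -/
/-! Restricting a configuration to `H` commutes with the two automata, because `M ⊆ H` keeps every
neighbourhood `h M` of a point of `H` inside `H`. So the restriction of a `τG`-preimage of any
extension of `d : H → A` to `G` is a `τH`-preimage of `d`. -/

theorem cellularAutomaton_restrict_comp {G A : Type*} [Group G] {H : Subgroup G}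
    {M : Finset G} (hM : ∀ m ∈ M, m ∈ H) (μ : (M → A) → A)
    {τG : (G → A) → (G → A)} {τH : (H → A) → (H → A)}
    (hτG : ∀ (c : G → A) (g : G), τG c g = μ (fun m => c (g * m.1)))
    (hτH : ∀ (c : H → A) (h : H), τH c h = μ (fun m => c (h * ⟨m.1, hM m.1 m.2⟩)))
    (c : G → A) : τH (c ∘ Subtype.val) = τG c ∘ Subtype.val := by
  funext h
  simp only [Function.comp_apply, hτG, hτH, Subgroup.coe_mul]

theorem stmt17_general {G A : Type*} [Group G] (H : Subgroup G)
    (M : Finset G) (hM : ∀ m ∈ M, m ∈ H)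
    (μ : (M → A) → A)
    (τG : (G → A) → (G → A)) (τH : (H → A) → (H → A))
    (hτG : ∀ (c : G → A) (g : G), τG c g = μ (fun m => c (g * m.1)))
    (hτH : ∀ (c : H → A) (h : H), τH c h = μ (fun m => c (h * ⟨m.1, hM m.1 m.2⟩)))
    (hsurj : Function.Surjective τG) : Function.Surjective τH := by
  intro d
  obtain ⟨c, hc⟩ := hsurj (Function.extend Subtype.val d fun _ => d 1)
  refine ⟨c ∘ Subtype.val, ?_⟩
  rw [cellularAutomaton_restrict_comp hM μ hτG hτH, hc]
  exact Function.extend_comp Subtype.val_injective _ _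

/-- for a group homomorphism local defining map `μ : A^M → A`
with `M ⊆ H ≤ G`, if the induced cellular automaton over `G` is surjective then
the induced cellular automaton over `H` is surjective. -/
theorem stmt17 {G A : Type*} [Group G] [Group A] (H : Subgroup G)
    (M : Finset G) (hM : ∀ m ∈ M, m ∈ H)
    (μ : (M → A) → A) (hμ : ∀ u v : M → A, μ (u * v) = μ u * μ v)
    (τG : (G → A) → (G → A)) (τH : (H → A) → (H → A))
    (hτG : ∀ (c : G → A) (g : G), τG c g = μ (fun m => c (g * m.1)))
    (hτH : ∀ (c : H → A) (h : H), τH c h = μ (fun m => c (h * ⟨m.1, hM m.1 m.2⟩)))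
    (hsurj : Function.Surjective τG) : Function.Surjective τH :=
  stmt17_general H M hM μ τG τH hτG hτH hsurj
end

section
/- Every group G that is locally L-surjunctive is L-surjunctive: if every finitely generated subgroup H of G has the property that all injective linear cellular automata V^H → V^H (V a finite-dimensional vector space over any field) are surjective, then G has the same property. -/
/-- A group `K` is L-surjunctive if for every finite-dimensional vector space
`V` over any field `k`, every injective linear cellular automaton `V^K → V^K`
is surjective. -/
def LSurjunctive (K : Type*) [Group K] : Prop :=
  ∀ (k : Type) [Field k] (V : Type) [AddCommGroup V] [Module k V]
    [FiniteDimensional k V] (τ : (K → V) → (K → V)),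
    IsCellularAutomaton τ → IsLinearMap k τ →
      Function.Injective τ → Function.Surjective τ

/-- every locally L-surjunctive group is L-surjunctive. -/
theorem stmt19 (G : Type*) [Group G]
    (h : ∀ H : Subgroup G, H.FG → LSurjunctive H) : LSurjunctive G := by
  intro k _ V _ _ _ τ hca hlin hinj
  classical
  obtain ⟨M, μ, hμ⟩ := hca
  set H : Subgroup G := Subgroup.closure ↑M with hH
  have hfg : H.FG := ⟨M, rfl⟩
  have hmem : ∀ m : M, (m.1 : G) ∈ H := fun m => Subgroup.subset_closure m.2
  -- the induced cellular automaton on H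
  set σ : (↥H → V) → (↥H → V) :=
    fun d x => μ (fun m => d (x * ⟨m.1, hmem m⟩)) with hσdef
  -- extension by zero
  set ext : (↥H → V) → (G → V) :=
    fun d g => if hg : g ∈ H then d ⟨g, hg⟩ else 0 with hextdef
  have hτ0 : τ 0 = 0 := by
    have := (IsLinearMap.mk' τ hlin).map_zero
    simpa using this
  have hμ0 : μ (fun _ => 0) = 0 := by
    have := hμ 0 1
    rw [hτ0] at this
    exact this.symm
  have hext_mem : ∀ d (g : G) (hg : g ∈ H), ext d g = d ⟨g, hg⟩ := by
    intro d g hg; simp [hextdef, hg]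
  -- key commutation
  have hkey : ∀ d, τ (ext d) = ext (σ d) := by
    intro d
    funext g
    by_cases hg : g ∈ H
    · rw [hμ, hext_mem (σ d) g hg, hσdef]
      congr 1
      funext m
      have hgm : g * m.1 ∈ H := H.mul_mem hg (hmem m)
      rw [hext_mem d _ hgm]
      rfl
    · rw [hμ]
      have : (fun m : M => ext d (g * m.1)) = fun _ => 0 := by
        funext m
        have : ¬ (g * m.1 ∈ H) := by
          intro hc
          exact hg (by simpa using H.mul_mem hc (H.inv_mem (hmem m)))
        simp [hextdef, this]
      rw [this, hμ0]
      simp [hextdef, hg]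
  have hext_inj : Function.Injective ext := by
    intro d d' hdd
    funext x
    have := congrFun hdd x.1
    rwa [hext_mem d x.1 x.2, hext_mem d' x.1 x.2] at this
  have hext_lin : IsLinearMap k ext := by
    constructor
    · intro d d'; funext g
      by_cases hg : g ∈ H <;> simp [hextdef, hg]
    · intro c d; funext g
      by_cases hg : g ∈ H <;> simp [hextdef, hg]
  -- σ is a cellular automaton
  have hσca : IsCellularAutomaton σ := by
    refine ⟨M.attach.image (fun m => (⟨m.1, hmem m⟩ : H)),
      fun u => μ (fun m => u ⟨⟨m.1, hmem m⟩,
        Finset.mem_image_of_mem _ (Finset.mem_attach _ _)⟩), ?_⟩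
    intro d x
    rfl
  -- σ is linear
  have hσlin : IsLinearMap k σ := by
    constructor
    · intro d d'
      apply hext_inj
      rw [← hkey, hext_lin.map_add, hlin.map_add, hkey, hkey, hext_lin.map_add]
    · intro c d
      apply hext_inj
      rw [← hkey, hext_lin.map_smul, hlin.map_smul, hkey, hext_lin.map_smul]
  -- σ is injective
  have hσinj : Function.Injective σ := by
    intro d d' hdd
    apply hext_inj
    apply hinj
    rw [hkey, hkey, hdd]
  have hσsurj : Function.Surjective σ := h H hfg k V σ hσca hσlin hσinj
  -- now prove τ surjective
  intro c
  have hrep : ∀ g : G, ((QuotientGroup.mk g : G ⧸ H).out)⁻¹ * g ∈ H := by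
    intro g
    exact QuotientGroup.eq.mp (QuotientGroup.out_eq' _)
  choose e he using fun q : G ⧸ H => hσsurj (fun x : H => c (q.out * x.1))
  refine ⟨fun g => e (QuotientGroup.mk g) ⟨((QuotientGroup.mk g : G ⧸ H).out)⁻¹ * g, hrep g⟩, ?_⟩
  funext g
  rw [hμ]
  have hc' : ∀ m : M,
      e (QuotientGroup.mk (g * m.1)) ⟨((QuotientGroup.mk (g * m.1) : G ⧸ H).out)⁻¹ * (g * m.1),
        hrep (g * m.1)⟩
      = e (QuotientGroup.mk g)
          ((⟨((QuotientGroup.mk g : G ⧸ H).out)⁻¹ * g, hrep g⟩ : H) * ⟨m.1, hmem m⟩) := by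
    intro m
    have hq : (QuotientGroup.mk (g * m.1) : G ⧸ H) = QuotientGroup.mk g := by
      rw [QuotientGroup.eq]
      simpa using H.inv_mem (hmem m)
    have harg : ((⟨((QuotientGroup.mk g : G ⧸ H).out)⁻¹ * g, hrep g⟩ : H) * ⟨m.1, hmem m⟩ : H)
        = ⟨((QuotientGroup.mk g : G ⧸ H).out)⁻¹ * (g * m.1), by
            simpa [mul_assoc] using H.mul_mem (hrep g) (hmem m)⟩ := by
      exact Subtype.ext (by simp [mul_assoc])
    rw [harg]
    congr 1 <;> simp [hq]
  calc μ (fun m : M => e (QuotientGroup.mk (g * m.1))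
        ⟨((QuotientGroup.mk (g * m.1) : G ⧸ H).out)⁻¹ * (g * m.1), hrep (g * m.1)⟩)
      = μ (fun m : M => e (QuotientGroup.mk g)
          ((⟨((QuotientGroup.mk g : G ⧸ H).out)⁻¹ * g, hrep g⟩ : H) * ⟨m.1, hmem m⟩)) := by
        congr 1; funext m; exact hc' m
    _ = σ (e (QuotientGroup.mk g)) ⟨((QuotientGroup.mk g : G ⧸ H).out)⁻¹ * g, hrep g⟩ := rfl
    _ = c ((QuotientGroup.mk g : G ⧸ H).out * (((QuotientGroup.mk g : G ⧸ H).out)⁻¹ * g)) := by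
        rw [he]
    _ = c g := by rw [mul_inv_cancel_left]
end
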